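/- Let L : ℝ^{N+1} → ℝ and φ : ℝ → ℝ be smooth, and suppose L(φ, φ', …, φ^{(N)}) is invariant under time translation in the sense that L has no explicit t-dependence. Then along any trajectory φ, the Euler–Lagrange expression E satisfies E(t) · φ'(t) = −d/dt[τ(t)], where τ(t) = Σ_{j=0}^{N−1} B_j(t) φ^{(j+1)}(t) − L(φ(t), …, φ^{(N)}(t)). -/

import Mathlib

open Finset

/-- The `N`-jet of a curve `φ`. -/
noncomputable def jet (N : ℕ) (φ : ℝ → ℝ) (t : ℝ) : Fin (N + 1) → ℝ :=
  fun k => iteratedDeriv k.1 φ t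

open Fin.NatCast in
/-- `∂L/∂y_k` evaluated along the `N`-jet of `φ`. -/
noncomputable def lagDeriv (N : ℕ) (L : (Fin (N + 1) → ℝ) → ℝ) (φ : ℝ → ℝ)
    (k : ℕ) (t : ℝ) : ℝ :=
  fderiv ℝ L (jet N φ t) (Pi.single (k : Fin (N + 1)) 1)

/-- `B_j = Σ_{k=j+1}^{N} (−1)^{k−j−1} d^{k−j−1}[∂L/∂y_k]` (with `k = j + 1 + m`). -/
noncomputable def boundaryMomentum (N : ℕ) (L : (Fin (N + 1) → ℝ) → ℝ)
    (φ : ℝ → ℝ) (j : ℕ) (t : ℝ) : ℝ :=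
  ∑ m ∈ Finset.range (N - j),
    (-1 : ℝ) ^ m * iteratedDeriv m (lagDeriv N L φ (j + 1 + m)) t

/-- The `N`-th order Euler–Lagrange expression along `φ`. -/
noncomputable def eulerLagrange (N : ℕ) (L : (Fin (N + 1) → ℝ) → ℝ)
    (φ : ℝ → ℝ) (t : ℝ) : ℝ :=
  ∑ k ∈ Finset.range (N + 1), (-1 : ℝ) ^ k * iteratedDeriv k (lagDeriv N L φ k) t

/-- The generalized (Ostrogradsky) energy `τ = Σ_j B_j φ^{(j+1)} − L(φ, …, φ^{(N)})`. -/
noncomputable def ostroEnergy (N : ℕ) (L : (Fin (N + 1) → ℝ) → ℝ)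
    (φ : ℝ → ℝ) (t : ℝ) : ℝ :=
  (∑ j ∈ Finset.range N, boundaryMomentum N L φ j t * iteratedDeriv (j + 1) φ t) -
    L (jet N φ t)

lemma contDiff_iteratedDeriv' {f : ℝ → ℝ} (hf : ContDiff ℝ (⊤ : ℕ∞) f) (m : ℕ) :
    ContDiff ℝ (⊤ : ℕ∞) (iteratedDeriv m f) := by
  induction m generalizing f with
  | zero => simpa [iteratedDeriv_zero]
  | succ m ih => rw [iteratedDeriv_succ']; exact ih ((contDiff_infty_iff_deriv.mp hf).2)

lemma jet_contDiff (N : ℕ) {φ : ℝ → ℝ} (hφ : ContDiff ℝ (⊤ : ℕ∞) φ) :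
    ContDiff ℝ (⊤ : ℕ∞) (jet N φ) := by
  rw [contDiff_pi]
  exact fun k => contDiff_iteratedDeriv' hφ k.1

open Fin.NatCast in
lemma lagDeriv_contDiff (N : ℕ) {L : (Fin (N + 1) → ℝ) → ℝ}
    (hL : ContDiff ℝ (⊤ : ℕ∞) L) {φ : ℝ → ℝ} (hφ : ContDiff ℝ (⊤ : ℕ∞) φ) (k : ℕ) :
    ContDiff ℝ (⊤ : ℕ∞) (lagDeriv N L φ k) := by
  have h1 : ContDiff ℝ (⊤ : ℕ∞) (fun x => fderiv ℝ L x) :=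
    hL.fderiv_right (by exact_mod_cast le_top)
  have h2 : ContDiff ℝ (⊤ : ℕ∞)
      (fun t => fderiv ℝ L (jet N φ t)) := h1.comp (jet_contDiff N hφ)
  exact (ContinuousLinearMap.apply ℝ ℝ (Pi.single (k : Fin (N + 1)) (1:ℝ))).contDiff.comp h2

lemma deriv_L_jet (N : ℕ) {L : (Fin (N + 1) → ℝ) → ℝ}
    (hL : ContDiff ℝ (⊤ : ℕ∞) L) {φ : ℝ → ℝ} (hφ : ContDiff ℝ (⊤ : ℕ∞) φ) (t : ℝ) :
    deriv (fun s => L (jet N φ s)) t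
      = ∑ k ∈ Finset.range (N + 1), lagDeriv N L φ k t * iteratedDeriv (k + 1) φ t := by
  set v : Fin (N + 1) → ℝ := fun k => iteratedDeriv (k.1 + 1) φ t with hv
  have hjet : HasDerivAt (jet N φ) v t := by
    rw [hasDerivAt_pi]
    intro i
    have hd : Differentiable ℝ (iteratedDeriv i.1 φ) :=
      (contDiff_iteratedDeriv' hφ i.1).differentiable (by simp)
    have := (hd t).hasDerivAt
    rw [show deriv (iteratedDeriv i.1 φ) t = iteratedDeriv (i.1 + 1) φ t by
      rw [iteratedDeriv_succ]] at this
    exact this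
  have hcomp : HasDerivAt (fun s => L (jet N φ s)) (fderiv ℝ L (jet N φ t) v) t :=
    (hL.differentiable (by simp) (jet N φ t)).hasFDerivAt.comp_hasDerivAt t hjet
  rw [hcomp.deriv]
  have hvsum : v = ∑ i : Fin (N + 1), v i • (Pi.single i 1 : Fin (N+1) → ℝ) := by
    funext j
    simp [Pi.single_apply]
  rw [hvsum, map_sum]
  have : ∀ i : Fin (N + 1),
      fderiv ℝ L (jet N φ t) (v i • (Pi.single i 1 : Fin (N+1) → ℝ))
        = lagDeriv N L φ i.1 t * iteratedDeriv (i.1 + 1) φ t := by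
    intro i
    rw [map_smul]
    simp [lagDeriv, hv, mul_comm]
  rw [Finset.sum_congr rfl (fun i _ => this i)]
  exact Fin.sum_univ_eq_sum_range (fun k => lagDeriv N L φ k t * iteratedDeriv (k + 1) φ t) (N + 1)

theorem offshell_noether_time_translation (N : ℕ)
    (L : (Fin (N + 1) → ℝ) → ℝ) (hL : ContDiff ℝ (⊤ : ℕ∞) L)
    (φ : ℝ → ℝ) (hφ : ContDiff ℝ (⊤ : ℕ∞) φ) :
    ∀ t : ℝ,
      eulerLagrange N L φ t * deriv φ t = -deriv (ostroEnergy N L φ) t := by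
  intro t
  have hL' : ContDiff ℝ (⊤ : ℕ∞) L := hL.of_le (by simp)
  have hφ' : ContDiff ℝ (⊤ : ℕ∞) φ := hφ.of_le (by simp)
  set A := lagDeriv N L φ with hA
  have hAs : ∀ k, ContDiff ℝ (⊤ : ℕ∞) (A k) := fun k => lagDeriv_contDiff N hL' hφ' k
  have hdiff : ∀ (k m : ℕ), Differentiable ℝ (iteratedDeriv m (A k)) := fun k m =>
    (contDiff_iteratedDeriv' (hAs k) m).differentiable (by simp)
  have hφdiff : ∀ m, Differentiable ℝ (iteratedDeriv m φ) := fun m =>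
    (contDiff_iteratedDeriv' hφ' m).differentiable (by simp)
  set C : ℕ → ℝ → ℝ :=
    fun j s => ∑ m ∈ Finset.range (N + 1 - j), (-1:ℝ)^m * iteratedDeriv m (A (j + m)) s
    with hC
  have hB : ∀ j, boundaryMomentum N L φ j = C (j+1) := by
    intro j
    funext s
    simp only [boundaryMomentum, hC, Nat.succ_sub_succ, ← hA]
  -- derivative of C (j+1)
  have hderivB : ∀ j, j ≤ N → deriv (C (j+1)) t = A j t - C j t := by
    intro j hj
    have h1 : deriv (C (j+1)) t
        = ∑ m ∈ Finset.range (N - j), (-1:ℝ)^m * iteratedDeriv (m+1) (A (j + 1 + m)) t := by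
      simp only [hC, Nat.succ_sub_succ]
      rw [deriv_fun_sum (fun m _ => (((hdiff (j+1+m) m) t).const_mul _))]
      refine Finset.sum_congr rfl fun m _ => ?_
      rw [deriv_const_mul _ ((hdiff (j+1+m) m) t), ← iteratedDeriv_succ]
    have h2 : C j t
        = (∑ m ∈ Finset.range (N - j),
            (-1:ℝ)^(m+1) * iteratedDeriv (m+1) (A (j + (m+1))) t) + A j t := by
      have hNj : N + 1 - j = (N - j) + 1 := by omega
      simp only [hC, hNj, Finset.sum_range_succ']
      simp [iteratedDeriv_zero]
    rw [h1, h2]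
    have : ∀ m, (-1:ℝ)^(m+1) * iteratedDeriv (m+1) (A (j + (m+1))) t
        = -((-1:ℝ)^m * iteratedDeriv (m+1) (A (j + 1 + m)) t) := by
      intro m
      rw [show j + (m+1) = j + 1 + m by omega, pow_succ]
      ring
    rw [Finset.sum_congr rfl fun m _ => this m, Finset.sum_neg_distrib]
    ring
  -- differentiability of pieces
  have hCdiff : ∀ j, Differentiable ℝ (C j) := by
    intro j
    apply Differentiable.fun_sum
    intro m _
    exact (hdiff (j+m) m).const_mul _
  have hLjet : Differentiable ℝ (fun s => L (jet N φ s)) :=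
    (hL'.comp (jet_contDiff N hφ')).differentiable (by simp)
  -- derivative of ostroEnergy
  have hEd : deriv (ostroEnergy N L φ) t
      = (∑ j ∈ Finset.range N, (deriv (C (j+1)) t * iteratedDeriv (j+1) φ t
          + C (j+1) t * iteratedDeriv (j+2) φ t))
        - ∑ k ∈ Finset.range (N+1), A k t * iteratedDeriv (k+1) φ t := by
    have : ostroEnergy N L φ
        = fun s => (∑ j ∈ Finset.range N, C (j+1) s * iteratedDeriv (j+1) φ s)
            - L (jet N φ s) := by
      funext s
      simp only [ostroEnergy, hB]
    rw [this]
    rw [deriv_fun_sub (by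
        apply DifferentiableAt.fun_sum
        intro j _
        exact ((hCdiff (j+1)) t).mul ((hφdiff (j+1)) t)) (hLjet t)]
    rw [deriv_L_jet N hL' hφ' t]
    congr 1
    rw [deriv_fun_sum (fun j _ => ((hCdiff (j+1)) t).fun_mul ((hφdiff (j+1)) t))]
    refine Finset.sum_congr rfl fun j _ => ?_
    rw [deriv_fun_mul ((hCdiff (j+1)) t) ((hφdiff (j+1)) t)]
    rw [show deriv (iteratedDeriv (j+1) φ) t = iteratedDeriv (j+2) φ t from
      (congrFun (iteratedDeriv_succ (n := j+1)) t).symm]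
  -- rewrite using hderivB
  have hEd2 : deriv (ostroEnergy N L φ) t
      = (∑ j ∈ Finset.range N, A j t * iteratedDeriv (j+1) φ t)
        + (∑ j ∈ Finset.range N,
            (C (j+1) t * iteratedDeriv (j+1+1) φ t - C j t * iteratedDeriv (j+1) φ t))
        - ∑ k ∈ Finset.range (N+1), A k t * iteratedDeriv (k+1) φ t := by
    rw [hEd]
    rw [← Finset.sum_add_distrib]
    congr 1
    refine Finset.sum_congr rfl fun j hj => ?_
    rw [hderivB j (le_of_lt (Finset.mem_range.mp hj))]
    ring
  -- telescoping
  have htel : (∑ j ∈ Finset.range N,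
      (C (j+1) t * iteratedDeriv (j+1+1) φ t - C j t * iteratedDeriv (j+1) φ t))
      = C N t * iteratedDeriv (N+1) φ t - C 0 t * iteratedDeriv 1 φ t :=
    Finset.sum_range_sub (fun j => C j t * iteratedDeriv (j+1) φ t) N
  have hCN : C N t = A N t := by
    simp [hC]
  have hC0 : C 0 t = eulerLagrange N L φ t := by
    simp only [hC, eulerLagrange, Nat.sub_zero, zero_add, ← hA]
  rw [hEd2, htel, hCN, hC0]
  have hsum : ∑ k ∈ Finset.range (N+1), A k t * iteratedDeriv (k+1) φ t
      = (∑ j ∈ Finset.range N, A j t * iteratedDeriv (j+1) φ t)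
        + A N t * iteratedDeriv (N+1) φ t := Finset.sum_range_succ _ N
  rw [hsum, iteratedDeriv_one]
  ring
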